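/- arXiv:math/0409304 — 4 statements merged into one kernel-verified Lean document; each statement's English description precedes it below -/
import Mathlib

section
/- If κ is a measurable cardinal, then ◊_κ(REG) holds: there is a sequence ⟨A_α : α < κ⟩ with A_α ⊆ α for every α < κ such that for every A ⊆ κ the set {α < κ : α is an infinite regular cardinal and A ∩ α = A_α} is stationary in κ. -/
open Set

/-- `C` is unbounded in `κ`. -/
def IsUnboundedIn (κ : Ordinal.{0}) (C : Set Ordinal.{0}) : Prop :=
  ∀ α < κ, ∃ β ∈ C, α < β

/-- `C` contains all of its limit points below `κ`. -/
def IsClosedIn (κ : Ordinal.{0}) (C : Set Ordinal.{0}) : Prop :=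
  ∀ α < κ, α ≠ 0 → (∀ β < α, ∃ γ ∈ C, β < γ ∧ γ < α) → α ∈ C

/-- `C ⊆ κ` is club in `κ`: unbounded and closed. -/
def IsClubIn (κ : Ordinal.{0}) (C : Set Ordinal.{0}) : Prop :=
  C ⊆ Set.Iio κ ∧ IsUnboundedIn κ C ∧ IsClosedIn κ C

/-- `S` is stationary in `κ`: it meets every club subset of `κ`. -/
def IsStationaryIn (κ : Ordinal.{0}) (S : Set Ordinal.{0}) : Prop :=
  ∀ C, IsClubIn κ C → (S ∩ C).Nonempty

/-- The ordinal `α` is an infinite regular cardinal. -/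
def IsRegOrd (α : Ordinal.{0}) : Prop :=
  ∃ c : Cardinal.{0}, c.IsRegular ∧ α = c.ord

/-- The ordinal `α` is a strongly inaccessible cardinal. -/
def IsInaccOrd (α : Ordinal.{0}) : Prop :=
  ∃ c : Cardinal.{0}, c.IsInaccessible ∧ α = c.ord
/-!
A `κ`-complete nonprincipal ultrafilter on `κ` becomes normal when pushed forward along a function
that is least, modulo the ultrafilter, among those not constant on a measure one set; such a least
function exists because the ultrapower order is well founded by countable completeness. A normal
measure `D` is closed under diagonal intersections, so it contains the limit points of every club,
and it contains the regular cardinals: press down first on the cofinality and then on each term of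
a fundamental sequence, which pins down the supremum.

The `◊(REG)`-sequence is built greedily: `A_α` is the first component of a pair `(S, C)`, with `C`
club in `α`, such that `S ∩ β ≠ A_β` at every regular `β ∈ C`, whenever such a pair exists. If
`(S, C)` were such a pair on `κ`, then `(S ∩ α, C ∩ α)` would be one at `D`-almost every `α`, so a
pair `(S_α, C_α)` is chosen there, and by normality these cohere: `S_α' ∩ α = S_α` and
`C_α' ∩ α = C_α` for `D`-almost all `α < α'`. Then `α` is a limit point of the club `C_α'`, hence
a regular point of it, and `S_α' ∩ α = S_α = A_α` contradicts the choice of `(S_α', C_α')`.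
-/

open Filter Cardinal

theorem Ultrafilter.eventually_iff_eventually {α : Type*} (f : Ultrafilter α) (p : α → Prop) :
    ∀ᶠ x in f, p x ↔ ∀ᶠ y in f, p y := by
  by_cases h : ∀ᶠ y in f, p y
  · exact h.mono fun x hx => iff_of_true hx h
  · exact (Ultrafilter.eventually_not.2 h).mono fun x hx => iff_of_false hx h

theorem Filter.wellFounded_eventually_lt {α β : Type*} [Preorder β] [WellFoundedLT β]
    (l : Filter α) [l.NeBot] [CountableInterFilter l] :
    WellFounded fun f g : α → β => ∀ᶠ x in l, f x < g x := by
  refine wellFounded_iff_isEmpty_descending_chain.2 ⟨fun ⟨f, hf⟩ => ?_⟩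
  obtain ⟨x, hx⟩ := (eventually_countable_forall.2 hf).exists
  exact (wellFounded_iff_isEmpty_descending_chain.1 wellFounded_lt).false ⟨(f · x), hx⟩

structure IsMeasureOn (κ : Cardinal.{0}) (μ : Ultrafilter Ordinal.{0}) : Prop where
  eventually_lt : ∀ᶠ α in μ, α < κ.ord
  singleton_notMem : ∀ α, {α} ∉ μ
  cardinalInterFilter : CardinalInterFilter (μ : Filter Ordinal.{0}) (lift.{1} κ)

theorem sInter_inter_mem_of_biInter_mem {κ : Cardinal.{0}} {U : Set (Set Ordinal.{0})}
    {I : Set Ordinal.{0}} (htop : I ∈ U) (hup : ∀ X ∈ U, ∀ Y, Y ⊆ I → X ⊆ Y → Y ∈ U)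
    (hcomplete : ∀ ι : Ordinal.{0}, ι ≠ 0 → ι.card < κ →
      ∀ f : Ordinal.{0} → Set Ordinal.{0}, (∀ β < ι, f β ∈ U) → (⋂ β ∈ Iio ι, f β) ∈ U)
    {S : Set (Set Ordinal)} (hS : #S < lift.{1} κ) (hSU : ∀ s ∈ S, s ∩ I ∈ U) :
    ⋂₀ S ∩ I ∈ U := by
  obtain ⟨c, hcκ, hcS⟩ := lt_lift_iff.1 hS
  rcases eq_or_ne c 0 with rfl | hc0
  · rw [lift_zero, eq_comm, mk_eq_zero_iff, isEmpty_coe_sort] at hcS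
    simpa [hcS] using htop
  have hc : 0 < c.ord := ord_pos.2 (pos_iff_ne_zero.2 hc0)
  -- enumerate `S` in order type `c.ord`
  obtain ⟨e⟩ : Nonempty (Iio c.ord ≃ S) :=
    Cardinal.eq.1 (by rw [mk_Iio_ordinal, card_ord, hcS])
  let f β := if h : β < c.ord then (e ⟨β, h⟩ : Set Ordinal) ∩ I else I
  refine hup _ (hcomplete c.ord hc.ne' (by rwa [card_ord]) f fun β hβ => ?_) _
    inter_subset_right ?_
  · simpa [f, hβ] using hSU _ (e _).2
  · intro x hx
    simp only [mem_iInter, mem_Iio] at hx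
    refine ⟨fun s hs => ?_, (by simpa [f, hc] using hx 0 hc : _ ∧ _).2⟩
    obtain ⟨⟨β, hβ⟩, he⟩ := e.surjective ⟨s, hs⟩
    have hβ' : β < c.ord := hβ
    have : x ∈ (e ⟨β, hβ⟩ : Set Ordinal) ∩ I := by simpa [f, hβ'] using hx β hβ'
    rw [he] at this
    exact this.1

theorem exists_isMeasureOn {κ : Cardinal.{0}} (hκ : 2 < κ) (U : Set (Set Ordinal.{0}))
    (htop : Iio κ.ord ∈ U) (hup : ∀ X ∈ U, ∀ Y, Y ⊆ Iio κ.ord → X ⊆ Y → Y ∈ U)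
    (hultra : ∀ X, X ⊆ Iio κ.ord → X ∈ U ∨ (Iio κ.ord \ X) ∈ U)
    (hnonprincipal : ∀ α : Ordinal.{0}, {α} ∉ U)
    (hcomplete : ∀ ι : Ordinal.{0}, ι ≠ 0 → ι.card < κ →
      ∀ f : Ordinal.{0} → Set Ordinal.{0}, (∀ β < ι, f β ∈ U) → (⋂ β ∈ Iio ι, f β) ∈ U) :
    ∃ μ, IsMeasureOn κ μ := by
  set I := Iio κ.ord
  have hempty : ∅ ∉ U := fun h => hnonprincipal 0 <| hup ∅ h {0}
    (singleton_subset_iff.2 (ord_pos.2 (zero_lt_two.trans hκ))) (empty_subset _)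
  -- `U` lives on `κ`; the filter it generates on all ordinals consists of the `X` with `X ∩ κ ∈ U`
  have h2 : 2 < lift.{1} κ := by simpa using lift_strictMono.{0, 1} hκ
  have hinter : ∀ S : Set (Set Ordinal), #S < lift.{1} κ → S ⊆ {X | X ∩ I ∈ U} → ⋂₀ S ∩ I ∈ U :=
    fun S hS hSU => sInter_inter_mem_of_biInter_mem htop hup hcomplete hS hSU
  have hmono : ∀ s t, s ∩ I ∈ U → s ⊆ t → t ∩ I ∈ U :=
    fun s t hs hst => hup _ hs _ inter_subset_right (inter_subset_inter_left _ hst)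
  let F := Filter.ofCardinalInter {X | X ∩ I ∈ U} h2 hinter hmono
  have hmem : ∀ s, s ∈ F ↔ s ∩ I ∈ U := fun s => Iff.rfl
  have hF : ∀ s, sᶜ ∉ F ↔ s ∈ F := fun s =>
    ⟨fun h => (hultra (s ∩ I) inter_subset_right).resolve_right fun h' =>
        h ((hmem _).2 (by rwa [sdiff_inter_self_eq_sdiff, sdiff_eq_compl_inter] at h')),
      fun h h' => hempty (by simpa using (hmem _).1 (inter_mem h h'))⟩
  refine ⟨Ultrafilter.ofComplNotMemIff F hF, (hmem I).2 (by rwa [inter_self]), fun α h => ?_,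
    Filter.cardinalInter_ofCardinalInter _ h2 hinter hmono⟩
  replace h := (hmem _).1 h
  by_cases hα : α < κ.ord
  · exact hnonprincipal α (by simpa [I, hα] using h)
  · exact hempty (by simpa [I, hα] using h)

structure IsNormalMeasureOn (κ : Cardinal.{0}) (μ : Ultrafilter Ordinal.{0}) : Prop
    extends IsMeasureOn κ μ where
  exists_eventually_eq_of_regressive :
    ∀ g : Ordinal → Ordinal, (∀ᶠ α in μ, g α < α) → ∃ γ, ∀ᶠ α in μ, g α = γ

namespace IsMeasureOn

variable {κ : Cardinal.{0}} {μ : Ultrafilter Ordinal.{0}}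

theorem eventually_forall_lt (hμ : IsMeasureOn κ μ) {ι : Ordinal} (hι : ι < κ.ord)
    {p : Ordinal → Ordinal → Prop} (h : ∀ β < ι, ∀ᶠ α in μ, p β α) :
    ∀ᶠ α in μ, ∀ β < ι, p β α := by
  have := hμ.cardinalInterFilter
  refine (eventually_cardinal_ball (c := lift.{1} κ) (S := Iio ι) ?_).2 h
  rwa [mk_Iio_ordinal, lift_lt, ← lt_ord]

theorem eventually_ne (hμ : IsMeasureOn κ μ) (β : Ordinal) : ∀ᶠ α in μ, α ≠ β :=
  Ultrafilter.eventually_not.2 (hμ.singleton_notMem β)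

theorem eventually_gt (hμ : IsMeasureOn κ μ) {γ : Ordinal} (hγ : γ < κ.ord) :
    ∀ᶠ α in μ, γ < α := by
  filter_upwards [hμ.eventually_forall_lt hγ fun β _ => hμ.eventually_ne β, hμ.eventually_ne γ]
    with α hlt hne
  exact lt_of_le_of_ne (not_lt.1 fun h => hlt α h rfl) hne.symm

theorem map_iff {g : Ordinal → Ordinal} (hμ : IsMeasureOn κ μ)
    (hg : ∀ᶠ α in μ, g α < κ.ord) :
    IsMeasureOn κ (μ.map g) ↔ ∀ γ, ¬ ∀ᶠ α in μ, g α = γ := by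
  have := hμ.cardinalInterFilter
  refine ⟨fun h γ => h.singleton_notMem γ, fun h => ⟨hg, h, ?_⟩⟩
  rw [Ultrafilter.coe_map]
  infer_instance

theorem exists_isNormalMeasureOn (hκ : ℵ₀ < κ) (hμ : IsMeasureOn κ μ) :
    ∃ ν, IsNormalMeasureOn κ ν := by
  have := hμ.cardinalInterFilter
  have : CountableInterFilter (μ : Filter Ordinal) :=
    CardinalInterFilter.toCountableInterFilter _ (aleph0_lt_lift.2 hκ)
  have hwf := Filter.wellFounded_eventually_lt (β := Ordinal) (μ : Filter Ordinal)
  let F := {g : Ordinal → Ordinal | IsMeasureOn κ (μ.map g)}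
  have hid : id ∈ F := by simpa [F] using hμ
  -- the normal measure is the image of `μ` under its least unbounded function
  let f := hwf.min F ⟨id, hid⟩
  have hf : IsMeasureOn κ (μ.map f) := hwf.min_mem F ⟨id, hid⟩
  refine ⟨μ.map f, hf, fun g hg => ?_⟩
  have hgf : g ∘ f ∉ F := fun h => hwf.not_lt_min F h hg
  have hbdd : ∀ᶠ x in μ, g (f x) < κ.ord := by
    filter_upwards [hg, hf.eventually_lt] with x hlt hfx using hlt.trans hfx
  simpa using (hμ.map_iff (g := g ∘ f) hbdd).not.1 hgf

end IsMeasureOn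

theorem ord_cof_lt_of_not_isRegOrd {α : Ordinal.{0}} (h1 : 1 < α) (h : ¬ IsRegOrd α) :
    α.cof.ord < α := by
  by_cases hα : Order.IsSuccLimit α
  · exact (Ordinal.ord_cof_le α).lt_of_ne fun heq => h ⟨α.cof, isRegular_cof hα, heq.symm⟩
  · have hcof : α.cof ≤ 1 := not_lt.1 (mt Ordinal.one_lt_cof_iff.1 hα)
    calc α.cof.ord ≤ 1 := by simpa using ord_le_ord.2 hcof
      _ < α := h1

namespace IsNormalMeasureOn

variable {κ : Cardinal.{0}} {D : Ultrafilter Ordinal.{0}}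

theorem eventually_forall_lt_self (hD : IsNormalMeasureOn κ D) {p : Ordinal → Ordinal → Prop}
    (h : ∀ β < κ.ord, ∀ᶠ α in D, p β α) : ∀ᶠ α in D, ∀ β < α, p β α := by
  by_contra hne
  have hbad := Ultrafilter.eventually_not.2 hne
  have : ∀ α, ∃ β, (¬ ∀ β < α, p β α) → β < α ∧ ¬ p β α := fun α => by
    by_cases hα : ∀ β < α, p β α
    · exact ⟨0, fun h => absurd hα h⟩
    · obtain ⟨β, hβ, hp⟩ := not_forall₂.1 hα
      exact ⟨β, fun _ => ⟨hβ, hp⟩⟩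
  choose g hg using this
  obtain ⟨γ, hγ⟩ := hD.exists_eventually_eq_of_regressive g (hbad.mono fun α h => (hg α h).1)
  obtain ⟨α, hα, hgα, hακ⟩ := (hbad.and (hγ.and hD.eventually_lt)).exists
  have hγκ : γ < κ.ord := hgα ▸ (hg α hα).1.trans hακ
  obtain ⟨α, hα, hgα, hp⟩ := (hbad.and (hγ.and (h γ hγκ))).exists
  exact (hg α hα).2 (hgα ▸ hp)

theorem eventually_isUnboundedIn_inter_Iio (hD : IsNormalMeasureOn κ D) {C : Set Ordinal}
    (hCκ : C ⊆ Iio κ.ord) (hC : IsUnboundedIn κ.ord C) :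
    ∀ᶠ α in D, IsUnboundedIn α (C ∩ Iio α) := by
  choose! c hcC hc using hC
  filter_upwards [hD.eventually_forall_lt_self fun β hβ => hD.eventually_gt (hCκ (hcC β hβ)),
    hD.eventually_lt] with α hα hακ β hβ
  exact ⟨c β, ⟨hcC β (hβ.trans hακ), hα β hβ⟩, hc β (hβ.trans hακ)⟩

theorem eventually_isRegOrd (hD : IsNormalMeasureOn κ D) : ∀ᶠ α in D, IsRegOrd α := by
  by_contra hne
  have hsing : ∀ᶠ α : Ordinal in D, α.cof.ord < α := by
    filter_upwards [Ultrafilter.eventually_not.2 hne, hD.eventually_ne 0, hD.eventually_ne 1]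
      with α hα h0 h1
    exact ord_cof_lt_of_not_isRegOrd ((Order.one_le_iff_ne_zero.2 h0).lt_of_ne h1.symm) hα
  obtain ⟨l, hl⟩ := hD.exists_eventually_eq_of_regressive _ hsing
  have hlκ : l < κ.ord := by
    obtain ⟨α, hα, hlα, hακ⟩ := (hsing.and (hl.and hD.eventually_lt)).exists
    exact hlα ▸ hα.trans hακ
  -- each term of a length-`l` fundamental sequence, hence its supremum, is eventually constant
  have : ∀ α, ∃ s : Ordinal → Ordinal,
      α.cof.ord = l → (∀ i < l, s i < α) ∧ ⨆ i : Iio l, s i + 1 = α := fun α => by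
    by_cases hα : α.cof.ord = l
    · obtain ⟨f, hf⟩ := Ordinal.exists_isFundamentalSeq hα
      refine ⟨fun i => if hi : i < l then f ⟨i, hi⟩ else 0, fun _ => ⟨fun i hi => ?_, ?_⟩⟩
      · dsimp only
        rw [dif_pos hi]
        exact (f _).2
      · refine (iSup_congr fun i => ?_).trans hf.iSup_add_one_eq
        dsimp only
        rw [dif_pos (mem_Iio.1 i.2)]
    · exact ⟨id, fun h => absurd h hα⟩
  choose s hs using this
  choose! γ hγ using fun i (hi : i < l) =>
    hD.exists_eventually_eq_of_regressive (s · i) (hl.mono fun α h => (hs α h).1 i hi)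
  refine hD.singleton_notMem (⨆ i : Iio l, γ i + 1) ?_
  filter_upwards [hl, hD.eventually_forall_lt hlκ hγ] with α hα hsγ
  rw [mem_singleton_iff, ← (hs α hα).2]
  exact iSup_congr fun i => by rw [hsγ i i.2]

theorem eventually_eventually_inter_Iio_eq (hD : IsNormalMeasureOn κ D)
    (s : Ordinal → Set Ordinal) :
    ∀ᶠ α in D, ∀ᶠ α' in D, α < α' ∧ s α' ∩ Iio α = s α ∩ Iio α := by
  have hagree : ∀ᶠ α in D, ∀ β < α, (β ∈ s α ↔ ∀ᶠ α' in D, β ∈ s α') :=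
    hD.eventually_forall_lt_self fun β _ => D.eventually_iff_eventually (β ∈ s ·)
  filter_upwards [hagree, hD.eventually_lt] with α hα hακ
  filter_upwards [hagree, hD.eventually_gt hακ] with α' hα' hαα'
  refine ⟨hαα', Set.ext fun β => and_congr_left fun hβ => ?_⟩
  exact (hα' β (hβ.trans hαα')).trans (hα β hβ).symm

end IsNormalMeasureOn

theorem IsClubIn.inter_Iio {κ α : Ordinal} {C : Set Ordinal} (hC : IsClubIn κ C) (hακ : α ≤ κ)
    (hα : IsUnboundedIn α (C ∩ Iio α)) : IsClubIn α (C ∩ Iio α) := by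
  refine ⟨inter_subset_right, hα, fun δ hδ hδ0 hlim => ⟨hC.2.2 δ (hδ.trans_le hακ) hδ0 ?_, hδ⟩⟩
  intro β hβ
  obtain ⟨γ, hγ, hβγ, hγδ⟩ := hlim β hβ
  exact ⟨γ, hγ.1, hβγ, hγδ⟩

/-- `(S, C)` witnesses that the guesses `A β`, `β < α`, do not form a `◊(T)`-sequence
below `α`. -/
def IsCounterexampleAt (T : Set Ordinal) (α : Ordinal) (A : ∀ β < α, Set Ordinal)
    (p : Set Ordinal × Set Ordinal) : Prop :=
  p.1 ⊆ Iio α ∧ IsClubIn α p.2 ∧ ∀ β (hβ : β < α), β ∈ p.2 → β ∈ T → p.1 ∩ Iio β ≠ A β hβ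

theorem IsCounterexampleAt.inter_Iio_ne {T : Set Ordinal} {α α' : Ordinal}
    {A : ∀ β < α', Set Ordinal} {p : Set Ordinal × Set Ordinal} (hp : IsCounterexampleAt T α' A p)
    (hαα' : α < α') (hα0 : α ≠ 0) (hαT : α ∈ T) (hα : IsUnboundedIn α (p.2 ∩ Iio α)) :
    p.1 ∩ Iio α ≠ A α hαα' := by
  refine hp.2.2 α hαα' (hp.2.1.2.2 α hαα' hα0 fun β hβ => ?_) hαT
  obtain ⟨γ, hγ, hβγ⟩ := hα β hβ
  exact ⟨γ, hγ.1, hβγ, hγ.2⟩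

open scoped Classical in
noncomputable def diamondPair (T : Set Ordinal) : Ordinal → Set Ordinal × Set Ordinal :=
  Ordinal.lt_wf.fix fun α A =>
    if h : ∃ p, IsCounterexampleAt T α (fun β hβ => (A β hβ).1) p then h.choose else (∅, ∅)

noncomputable def diamondSeq (T : Set Ordinal) (α : Ordinal) : Set Ordinal :=
  (diamondPair T α).1

open scoped Classical in
theorem diamondPair_eq (T : Set Ordinal) (α : Ordinal) :
    diamondPair T α =
      if h : ∃ p, IsCounterexampleAt T α (fun β _ => diamondSeq T β) p then h.choose
      else (∅, ∅) :=
  Ordinal.lt_wf.fix_eq _ α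

theorem diamondSeq_subset (T : Set Ordinal) (α : Ordinal) : diamondSeq T α ⊆ Iio α := by
  rw [diamondSeq, diamondPair_eq]
  split_ifs with h
  exacts [h.choose_spec.1, empty_subset _]

theorem isCounterexampleAt_diamondPair {T : Set Ordinal} {α : Ordinal}
    (h : ∃ p, IsCounterexampleAt T α (fun β _ => diamondSeq T β) p) :
    IsCounterexampleAt T α (fun β _ => diamondSeq T β) (diamondPair T α) := by
  rw [diamondPair_eq, dif_pos h]
  exact h.choose_spec

theorem IsNormalMeasureOn.isStationaryIn_diamondSeq {κ : Cardinal.{0}} {D : Ultrafilter Ordinal.{0}}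
    (hD : IsNormalMeasureOn κ D) {T : Set Ordinal} (hT : ∀ᶠ α in D, α ∈ T) (S : Set Ordinal) :
    IsStationaryIn κ.ord {α | α < κ.ord ∧ α ∈ T ∧ S ∩ Iio α = diamondSeq T α} := by
  intro C hC
  by_contra hno
  have hmiss : ∀ β ∈ C, β ∈ T → S ∩ Iio β ≠ diamondSeq T β :=
    fun β hβC hβT heq => hno ⟨β, ⟨hC.1 hβC, hβT, heq⟩, hβC⟩
  have hcex : ∀ᶠ α in D, IsCounterexampleAt T α (fun β _ => diamondSeq T β) (diamondPair T α) := by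
    filter_upwards [hD.eventually_isUnboundedIn_inter_Iio hC.1 hC.2.1, hD.eventually_lt]
      with α hCα hακ
    refine isCounterexampleAt_diamondPair ⟨(S ∩ Iio α, C ∩ Iio α), inter_subset_right,
      hC.inter_Iio hακ.le hCα, fun β hβ hβC hβT => ?_⟩
    rw [inter_assoc, Iio_inter_Iio, min_eq_right hβ.le]
    exact hmiss β hβC.1 hβT
  -- a pair `α < α'` at which the chosen counterexamples cohere gives the contradiction
  obtain ⟨α, hαcex, hαT, hα0, hαα'⟩ := (hcex.and (hT.and ((hD.eventually_ne 0).and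
    ((hD.eventually_eventually_inter_Iio_eq (diamondSeq T)).and
      (hD.eventually_eventually_inter_Iio_eq fun α => (diamondPair T α).2))))).exists
  obtain ⟨α', hα'cex, ⟨hlt, hS⟩, -, hC'⟩ := (hcex.and (hαα'.1.and hαα'.2)).exists
  refine hα'cex.inter_Iio_ne hlt hα0 hαT ?_ ?_
  · rw [hC', inter_eq_left.2 hαcex.2.1.1]
    exact hαcex.2.1.2.1
  · rw [← inter_eq_left.2 (diamondSeq_subset T α)]
    exact hS

theorem measurable_implies_diamond_reg_general (κ : Cardinal.{0}) (hκ : Cardinal.aleph0 < κ)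
    (U : Set (Set Ordinal.{0}))
    (htop : Set.Iio κ.ord ∈ U)
    (hup : ∀ X ∈ U, ∀ Y, Y ⊆ Set.Iio κ.ord → X ⊆ Y → Y ∈ U)
    (hultra : ∀ X, X ⊆ Set.Iio κ.ord → X ∈ U ∨ (Set.Iio κ.ord \ X) ∈ U)
    (hnonprincipal : ∀ α : Ordinal.{0}, {α} ∉ U)
    (hcomplete : ∀ ι : Ordinal.{0}, ι ≠ 0 → ι.card < κ →
      ∀ f : Ordinal.{0} → Set Ordinal.{0}, (∀ β < ι, f β ∈ U) →
        (⋂ β ∈ Set.Iio ι, f β) ∈ U) :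
    ∃ A : Ordinal.{0} → Set Ordinal.{0},
      (∀ α < κ.ord, A α ⊆ Set.Iio α) ∧
      ∀ S, S ⊆ Set.Iio κ.ord →
        IsStationaryIn κ.ord
          {α | α < κ.ord ∧ IsRegOrd α ∧ S ∩ Set.Iio α = A α} := by
  obtain ⟨μ, hμ⟩ := exists_isMeasureOn (ofNat_lt_aleph0.trans hκ) U htop hup hultra
    hnonprincipal hcomplete
  obtain ⟨D, hD⟩ := hμ.exists_isNormalMeasureOn hκ
  exact ⟨diamondSeq {α | IsRegOrd α}, fun α _ => diamondSeq_subset _ α,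
    fun S _ => hD.isStationaryIn_diamondSeq hD.eventually_isRegOrd S⟩

/-- If `κ` is a measurable cardinal (uncountable, carrying a `κ`-complete
nonprincipal ultrafilter `U` on the ordinals below `κ`), then `◊_κ(REG)` holds:
there is a sequence `⟨A_α : α < κ⟩` with `A_α ⊆ α` such that for every `S ⊆ κ`
the set of infinite regular cardinals `α < κ` with `S ∩ α = A_α` is stationary. -/
theorem measurable_implies_diamond_reg (κ : Cardinal.{0}) (hκ : Cardinal.aleph0 < κ)
    (U : Set (Set Ordinal.{0}))
    (hsub : ∀ X ∈ U, X ⊆ Set.Iio κ.ord)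
    (htop : Set.Iio κ.ord ∈ U)
    (hup : ∀ X ∈ U, ∀ Y, Y ⊆ Set.Iio κ.ord → X ⊆ Y → Y ∈ U)
    (hultra : ∀ X, X ⊆ Set.Iio κ.ord → X ∈ U ∨ (Set.Iio κ.ord \ X) ∈ U)
    (hnonprincipal : ∀ α : Ordinal.{0}, {α} ∉ U)
    (hcomplete : ∀ ι : Ordinal.{0}, ι ≠ 0 → ι.card < κ →
      ∀ f : Ordinal.{0} → Set Ordinal.{0}, (∀ β < ι, f β ∈ U) →
        (⋂ β ∈ Set.Iio ι, f β) ∈ U) :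
    ∃ A : Ordinal.{0} → Set Ordinal.{0},
      (∀ α < κ.ord, A α ⊆ Set.Iio α) ∧
      ∀ S, S ⊆ Set.Iio κ.ord →
        IsStationaryIn κ.ord
          {α | α < κ.ord ∧ IsRegOrd α ∧ S ∩ Set.Iio α = A α} :=
  measurable_implies_diamond_reg_general κ hκ U htop hup hultra hnonprincipal hcomplete
end

section
/- Every subtle cardinal is strongly inaccessible: if κ is an uncountable cardinal such that for every club C ⊆ κ and every sequence ⟨A_α : α ∈ C⟩ with A_α ⊆ α there exist α < β both in C with A_α = A_β ∩ α, then κ is regular and a strong limit cardinal (2^μ < κ for every cardinal μ < κ). -/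
open Set

/-- Every subtle cardinal is strongly inaccessible: if `κ` is an uncountable
cardinal such that for every club `C ⊆ κ` and every sequence `⟨A_α : α ∈ C⟩`
with `A_α ⊆ α` there are `α < β` in `C` with `A_α = A_β ∩ α`, then `κ` is
regular and a strong limit cardinal. -/
theorem subtle_is_inaccessible (κ : Cardinal.{0}) (hκ : Cardinal.aleph0 < κ)
    (hsubtle : ∀ C, IsClubIn κ.ord C →
      ∀ A : Ordinal.{0} → Set Ordinal.{0}, (∀ α ∈ C, A α ⊆ Set.Iio α) →
        ∃ α ∈ C, ∃ β ∈ C, α < β ∧ A α = A β ∩ Set.Iio α) :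
    κ.IsRegular ∧ ∀ μ < κ, (2 : Cardinal.{0}) ^ μ < κ := by
  have hκ0 : Cardinal.aleph0 ≤ κ := hκ.le
  have hlim := Cardinal.isSuccLimit_ord hκ0
  constructor
  · -- regularity
    refine ⟨hκ0, ?_⟩
    by_contra hreg
    push_neg at hreg
    set l : Ordinal := κ.ord.cof.ord with hl
    have hLk : l < κ.ord := Cardinal.ord_lt_ord.mpr hreg
    obtain ⟨f, hf⟩ := Ordinal.exists_fundamental_sequence κ.ord
    set F : Ordinal → Ordinal := fun ξ => if h : ξ < l then f ξ h else 0 with hF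
    set R : Set Ordinal := {γ | ∃ ξ, ∃ _ : ξ < l, F ξ = γ} with hR
    have hFeq : ∀ ξ (h : ξ < l), F ξ = f ξ h := fun ξ h => dif_pos h
    have hRlt : ∀ γ ∈ R, γ < κ.ord := by
      rintro γ ⟨ξ, hξ, rfl⟩
      rw [hFeq ξ hξ]
      exact hf.lt hξ
    have hRunb : ∀ δ < κ.ord, ∃ γ ∈ R, δ < γ := by
      intro δ hδ
      have hδ1 : δ + 1 < κ.ord := hlim.succ_lt hδ
      rw [← hf.blsub_eq, Ordinal.lt_blsub_iff] at hδ1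
      obtain ⟨i, hi, hle⟩ := hδ1
      exact ⟨F i, ⟨i, hi, rfl⟩, by rw [hFeq i hi]; exact (Order.add_one_le_iff.mp hle)⟩
    set C : Set Ordinal :=
      {α | α < κ.ord ∧ l < α ∧ (α ∈ R ∨ ∀ β < α, ∃ γ ∈ R, β < γ ∧ γ < α)} with hC
    have hclub : IsClubIn κ.ord C := by
      refine ⟨fun α h => h.1, ?_, ?_⟩
      · intro α hα
        obtain ⟨γ, hγR, hγ⟩ := hRunb (max α l) (max_lt hα hLk)
        exact ⟨γ, ⟨hRlt γ hγR, (le_max_right α l).trans_lt hγ, Or.inl hγR⟩,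
          (le_max_left α l).trans_lt hγ⟩
      · intro α hα hα0 h
        have hLa : l < α := by
          by_contra hc
          push_neg at hc
          obtain ⟨γ, hγC, _, hγα⟩ := h 0 (pos_iff_ne_zero.mpr hα0)
          exact absurd (hγα.trans_le hc) (not_lt_of_gt hγC.2.1)
        refine ⟨hα, hLa, Or.inr ?_⟩
        intro β hβ
        obtain ⟨γ, hγC, hγ1, hγ2⟩ := h (max β l) (max_lt hβ hLa)
        rcases hγC.2.2 with hRm | hlp
        · exact ⟨γ, hRm, (le_max_left β l).trans_lt hγ1, hγ2⟩
        · obtain ⟨γ', hγ'R, h1, h2⟩ := hlp (max β l) hγ1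
          exact ⟨γ', hγ'R, (le_max_left β l).trans_lt h1, h2.trans hγ2⟩
    set A : Ordinal → Set Ordinal :=
      fun α => {ξ | ξ < l ∧ F ξ < α} ∪ {ξ | ξ = l ∧ α ∈ R} with hA
    have hAsub : ∀ α ∈ C, A α ⊆ Set.Iio α := by
      rintro α hαC ξ (⟨h1, _⟩ | ⟨h1, _⟩)
      · exact h1.trans hαC.2.1
      · exact h1 ▸ hαC.2.1
    obtain ⟨α, hαC, β, hβC, hαβ, hAB⟩ := hsubtle C hclub A hAsub
    have hABfull : A α = A β := by
      refine hAB.trans (inter_eq_left.mpr ?_)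
      rintro ξ (⟨h1, _⟩ | ⟨h1, _⟩)
      · exact h1.trans hαC.2.1
      · exact h1 ▸ hαC.2.1
    rcases hβC.2.2 with hβR | hβlp
    · by_cases hαR : α ∈ R
      · obtain ⟨ξ, hξ, hFξ⟩ := hαR
        have h1 : ξ ∈ A β := Or.inl ⟨hξ, by rw [hFξ]; exact hαβ⟩
        rw [← hABfull] at h1
        rcases h1 with ⟨_, h⟩ | ⟨h, _⟩
        · rw [hFξ] at h; exact lt_irrefl α h
        · exact absurd hξ (by rw [h]; exact lt_irrefl l)
      · have h1 : l ∈ A β := Or.inr ⟨rfl, hβR⟩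
        rw [← hABfull] at h1
        rcases h1 with ⟨h, _⟩ | ⟨_, h⟩
        · exact lt_irrefl l h
        · exact hαR h
    · obtain ⟨γ, hγR, hαγ, hγβ⟩ := hβlp α hαβ
      obtain ⟨ξ, hξ, hFξ⟩ := hγR
      have h1 : ξ ∈ A β := Or.inl ⟨hξ, by rw [hFξ]; exact hγβ⟩
      rw [← hABfull] at h1
      rcases h1 with ⟨_, h⟩ | ⟨h, _⟩
      · rw [hFξ] at h; exact absurd hαγ (asymm h)
      · exact absurd hξ (by rw [h]; exact lt_irrefl l)
  · -- strong limit
    intro μ hμ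
    rcases lt_or_ge μ Cardinal.aleph0 with hfin | hinf
    · exact (Cardinal.power_lt_aleph0 (by exact_mod_cast Cardinal.nat_lt_aleph0 2) hfin).trans hκ
    · by_contra hle
      push_neg at hle
      have hμκ : μ.ord < κ.ord := Cardinal.ord_lt_ord.mpr hμ
      have h1 : Cardinal.mk (Iio κ.ord) ≤ Cardinal.mk (Set (Iio μ.ord)) := by
        rw [Ordinal.mk_Iio_ordinal, Cardinal.mk_set, Ordinal.mk_Iio_ordinal,
          Cardinal.card_ord, Cardinal.card_ord]
        calc Cardinal.lift.{1} κ ≤ Cardinal.lift.{1} (2 ^ μ) := Cardinal.lift_le.mpr hle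
          _ = 2 ^ Cardinal.lift.{1} μ := by
            rw [Cardinal.lift_power]; norm_num
      obtain ⟨g⟩ := Cardinal.le_def (Iio κ.ord) (Set (Iio μ.ord)) |>.mp h1
      set A : Ordinal → Set Ordinal :=
        fun α => {x | ∃ hx : x < μ.ord, ∃ hα : α < κ.ord, (⟨x, hx⟩ : Iio μ.ord) ∈ g ⟨α, hα⟩}
        with hA
      set C : Set Ordinal := {α | μ.ord < α ∧ α < κ.ord} with hC
      have hclub : IsClubIn κ.ord C := by
        refine ⟨fun α h => h.2, ?_, ?_⟩
        · intro α hα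
          have hm : max α μ.ord < κ.ord := max_lt hα hμκ
          exact ⟨max α μ.ord + 1, ⟨(le_max_right α μ.ord).trans_lt (Order.lt_succ _),
            hlim.succ_lt hm⟩, (le_max_left α μ.ord).trans_lt (Order.lt_succ _)⟩
        · intro α hα hα0 h
          refine ⟨?_, hα⟩
          by_contra hc
          push_neg at hc
          obtain ⟨γ, hγC, _, hγα⟩ := h 0 (pos_iff_ne_zero.mpr hα0)
          exact absurd (hγα.trans_le hc) (not_lt_of_gt hγC.1)
      have hAsub : ∀ α ∈ C, A α ⊆ Set.Iio α := by
        rintro α hαC x ⟨hx, _⟩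
        exact hx.trans hαC.1
      obtain ⟨α, hαC, β, hβC, hαβ, hAB⟩ := hsubtle C hclub A hAsub
      have hABfull : A α = A β := by
        refine hAB.trans (inter_eq_left.mpr ?_)
        rintro x ⟨hx, _⟩
        exact hx.trans hαC.1
      have hgeq : g ⟨α, hαC.2⟩ = g ⟨β, hβC.2⟩ := by
        ext ⟨x, hx⟩
        constructor
        · intro h
          have hxA : x ∈ A α := ⟨hx, hαC.2, h⟩
          rw [hABfull] at hxA
          obtain ⟨hx', hβ', h'⟩ := hxA
          exact h'
        · intro h
          have hxA : x ∈ A β := ⟨hx, hβC.2, h⟩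
          rw [← hABfull] at hxA
          obtain ⟨hx', hα', h'⟩ := hxA
          exact h'
      exact hαβ.ne (congrArg Subtype.val (g.injective hgeq))
end

section
/- Let κ be a strongly inaccessible cardinal, let ⟨A_α : α < κ⟩ be a potential ◊_κ sequence, and let 0 < γ < κ. Then the set D_γ is ≤γ-directed closed: for every family ⟨(s_α, c_α) : α < γ⟩ of conditions in D_γ that is directed (any two members of the family have a common lower bound among the members of the family), the pair (s, c̄) with s = ⋃_{α<γ} s_α, c = ⋃_{α<γ} c_α and c̄ = c ∪ {sup(c)} is a condition of the diamond killing poset Q, lies in D_γ, and is a lower bound of every (s_α, c_α). -/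
open Set

/-- `c` is a closed bounded subset of `κ`. -/
def IsClosedBddIn (κ : Ordinal.{0}) (c : Set Ordinal.{0}) : Prop :=
  c ⊆ Set.Iio κ ∧ (∃ β, β < κ ∧ ∀ α ∈ c, α ≤ β) ∧ IsClosedIn κ c

/-- `p = (s, c)` is a condition of the diamond killing poset for the potential
`◊_κ` sequence `A`: `c` is a closed bounded subset of `κ`, `s ⊆ sup c`, and
`s ∩ α ≠ A α` for every strongly inaccessible `α ∈ c`. -/
def IsCond (κ : Ordinal.{0}) (A : Ordinal.{0} → Set Ordinal.{0})
    (p : Set Ordinal.{0} × Set Ordinal.{0}) : Prop :=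
  IsClosedBddIn κ p.2 ∧ p.1 ⊆ Set.Iio (sSup p.2) ∧
    ∀ α ∈ p.2, IsInaccOrd α → p.1 ∩ Set.Iio α ≠ A α

/-- The ordering of the diamond killing poset: `(s', c') ≤ (s, c)` iff
`s' ∩ sup c = s` and `c' ∩ (sup c + 1) = c`. -/
def CondLE (p q : Set Ordinal.{0} × Set Ordinal.{0}) : Prop :=
  p.1 ∩ Set.Iio (sSup q.2) = q.1 ∧ p.2 ∩ Set.Iic (sSup q.2) = q.2

/-- `D_γ`: the set of conditions `(s, c)` with `c \ γ ≠ ∅`. -/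
def DSet (κ : Ordinal.{0}) (A : Ordinal.{0} → Set Ordinal.{0}) (γ : Ordinal.{0}) :
    Set (Set Ordinal.{0} × Set Ordinal.{0}) :=
  {p | IsCond κ A p ∧ (p.2 \ Set.Iio γ).Nonempty}

/-!
Directedness makes the family coherent: each `(s_α, c_α)` is the restriction of `(s, c)` below
`sup c_α`, so closedness of `c` and the requirement `s ∩ α ≠ A_α` at inaccessible `α ∈ c` are
inherited from the pieces. The only new point of `c̄` is `sup c`; when it is inaccessible,
regularity forces it to be one of the maxima `max c_α`, so it already lies in `c`.
-/

open Cardinal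

namespace IsClosedBddIn

variable {κ : Ordinal.{0}} {c : Set Ordinal.{0}}

theorem bddAbove (h : IsClosedBddIn κ c) : BddAbove c :=
  let ⟨_, _, hβ⟩ := h.2.1
  ⟨_, hβ⟩

theorem csSup_lt (h : IsClosedBddIn κ c) : sSup c < κ :=
  let ⟨_, hβκ, hβ⟩ := h.2.1
  (csSup_le' hβ).trans_lt hβκ

theorem csSup_mem (h : IsClosedBddIn κ c) (hne : c.Nonempty) : sSup c ∈ c := by
  by_contra hnot
  have hne0 : sSup c ≠ 0 := by
    rintro h0
    obtain ⟨x, hx⟩ := hne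
    have hx0 : x = 0 := nonpos_iff_eq_zero.1 (h0 ▸ le_csSup h.bddAbove hx)
    exact hnot (h0 ▸ hx0 ▸ hx)
  refine hnot (h.2.2 _ h.csSup_lt hne0 fun β hβ => ?_)
  obtain ⟨t, ht, hβt⟩ := exists_lt_of_lt_csSup' hβ
  exact ⟨t, ht, hβt, (le_csSup h.bddAbove ht).lt_of_ne fun heq => hnot (heq ▸ ht)⟩

end IsClosedBddIn

theorem Set.biUnion_inter_eq_of_directed {ι α : Type*} {I : Set ι} {g S : ι → Set α}
    (hdir : ∀ i ∈ I, ∀ j ∈ I, ∃ k ∈ I, g k ∩ S i = g i ∧ g k ∩ S j = g j)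
    {i : ι} (hi : i ∈ I) (hsub : g i ⊆ S i) : (⋃ j ∈ I, g j) ∩ S i = g i := by
  refine Subset.antisymm ?_ fun x hx => ⟨mem_biUnion hi hx, hsub hx⟩
  rintro x ⟨hx, hxS⟩
  obtain ⟨j, hj, hxj⟩ := mem_iUnion₂.1 hx
  obtain ⟨k, -, hki, hkj⟩ := hdir i hi j hj
  exact hki ▸ ⟨(hkj ▸ hxj : x ∈ g k ∩ S j).1, hxS⟩

theorem Set.union_singleton_csSup_subset_Iic {c : Set Ordinal.{0}} (hc : BddAbove c) :
    c ∪ {sSup c} ⊆ Iic (sSup c) :=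
  union_subset (fun _ hx => le_csSup hc hx) (singleton_subset_iff.2 self_mem_Iic)

theorem IsClosedIn.union_csSup {κ : Ordinal.{0}} {c : Set Ordinal.{0}} (hc : BddAbove c)
    (hcl : IsClosedIn (sSup c) c) : IsClosedIn κ (c ∪ {sSup c}) := by
  intro x _ hx0 hlim
  rcases lt_trichotomy x (sSup c) with hx | rfl | hx
  · refine Or.inl (hcl x hx hx0 fun β hβ => ?_)
    obtain ⟨t, ht, hβt, htx⟩ := hlim β hβ
    refine ⟨t, ht.resolve_right ?_, hβt, htx⟩
    rintro rfl
    exact htx.not_gt hx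
  · exact Or.inr rfl
  · obtain ⟨t, ht, hct, -⟩ := hlim _ hx
    exact absurd (union_singleton_csSup_subset_Iic hc ht) hct.not_ge

theorem isClosedIn_csSup_biUnion {ι : Type*} {κ : Ordinal.{0}} {I : Set ι}
    {g : ι → Set Ordinal.{0}} (hg : ∀ i ∈ I, IsClosedBddIn κ (g i))
    (hcoh : ∀ i ∈ I, (⋃ j ∈ I, g j) ∩ Iic (sSup (g i)) = g i) :
    IsClosedIn (sSup (⋃ j ∈ I, g j)) (⋃ j ∈ I, g j) := by
  intro x hx hx0 hlim
  obtain ⟨e, he, hxe⟩ := exists_lt_of_lt_csSup' hx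
  obtain ⟨i, hi, hei⟩ := mem_iUnion₂.1 he
  have hxi : x < sSup (g i) := hxe.trans_le (le_csSup (hg i hi).bddAbove hei)
  refine mem_biUnion hi ((hg i hi).2.2 x (hxi.trans (hg i hi).csSup_lt) hx0 fun β hβ => ?_)
  obtain ⟨t, ht, hβt, htx⟩ := hlim β hβ
  exact ⟨t, hcoh i hi ▸ ⟨ht, (htx.trans hxi).le⟩, hβt, htx⟩

theorem bddAbove_biUnion_Iio {γ : Ordinal.{u}} {g : Ordinal.{u} → Set Ordinal.{u}}
    (hg : ∀ β < γ, BddAbove (g β)) : BddAbove (⋃ β ∈ Iio γ, g β) := by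
  have hsmall (β : Ordinal.{u}) (hβ : β ∈ Iio γ) : Small.{u} (g β) :=
    Ordinal.bddAbove_iff_small.1 (hg β hβ)
  exact Ordinal.bddAbove_iff_small.2 (@small_biUnion _ _ _ _ _ hsmall)

theorem csSup_biUnion_Iio_lt_ord {r : Cardinal.{u}} (hr : r.IsRegular) {γ : Ordinal.{u}}
    (hγ : γ < r.ord) {g : Ordinal.{u} → Set Ordinal.{u}} (hg : ∀ β < γ, BddAbove (g β))
    (hlt : ∀ β < γ, sSup (g β) < r.ord) : sSup (⋃ β ∈ Iio γ, g β) < r.ord := by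
  have hcard : #((fun β => sSup (g β)) '' Iio γ) < (Ordinal.lift.{u + 1} r.ord).cof := by
    rw [← Ordinal.lift_cof, hr.cof_ord]
    refine mk_image_le.trans_lt ?_
    rw [mk_Iio_ordinal, lift_lt]
    exact lt_ord.1 hγ
  refine (csSup_le' fun x hx => ?_).trans_lt (Ordinal.sSup_lt_of_lt_cof hcard ?_)
  · obtain ⟨β, hβ, hxβ⟩ := mem_iUnion₂.1 hx
    exact (le_csSup (hg β hβ) hxβ).trans
      (le_csSup Ordinal.bddAbove_of_small (mem_image_of_mem _ hβ))
  · rintro _ ⟨β, hβ, rfl⟩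
    exact hlt β hβ

section DSet

variable {κ γ : Ordinal.{0}} {A : Ordinal.{0} → Set Ordinal.{0}}

theorem csSup_snd_mem_of_mem_DSet {p : Set Ordinal.{0} × Set Ordinal.{0}}
    (hp : p ∈ DSet κ A γ) : sSup p.2 ∈ p.2 :=
  hp.1.1.csSup_mem (hp.2.mono sdiff_subset)

theorem le_csSup_snd_of_mem_DSet {p : Set Ordinal.{0} × Set Ordinal.{0}}
    (hp : p ∈ DSet κ A γ) : γ ≤ sSup p.2 :=
  let ⟨_, he, hγe⟩ := hp.2
  (not_lt.1 hγe).trans (le_csSup hp.1.1.bddAbove he)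

end DSet

section DirectedFamily

variable {A : Ordinal.{0} → Set Ordinal.{0}} {γ : Ordinal.{0}}
  {f : Ordinal.{0} → Set Ordinal.{0} × Set Ordinal.{0}}

def unionFst (γ : Ordinal.{0}) (f : Ordinal.{0} → Set Ordinal.{0} × Set Ordinal.{0}) :
    Set Ordinal.{0} :=
  ⋃ β ∈ Iio γ, (f β).1

def unionSnd (γ : Ordinal.{0}) (f : Ordinal.{0} → Set Ordinal.{0} × Set Ordinal.{0}) :
    Set Ordinal.{0} :=
  ⋃ β ∈ Iio γ, (f β).2

def unionCond (γ : Ordinal.{0}) (f : Ordinal.{0} → Set Ordinal.{0} × Set Ordinal.{0}) :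
    Set Ordinal.{0} × Set Ordinal.{0} :=
  (unionFst γ f, unionSnd γ f ∪ {sSup (unionSnd γ f)})

theorem unionFst_inter_Iio {κ : Ordinal.{0}} (hcond : ∀ α < γ, IsCond κ A (f α))
    (hdir : ∀ α < γ, ∀ β < γ, ∃ δ < γ, CondLE (f δ) (f α) ∧ CondLE (f δ) (f β))
    {α : Ordinal.{0}} (hα : α < γ) : unionFst γ f ∩ Iio (sSup (f α).2) = (f α).1 :=
  biUnion_inter_eq_of_directed (g := fun β => (f β).1) (S := fun β => Iio (sSup (f β).2))
    (fun α hα β hβ => let ⟨δ, hδ, hδα, hδβ⟩ := hdir α hα β hβ; ⟨δ, hδ, hδα.1, hδβ.1⟩)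
    hα (hcond α hα).2.1

theorem unionSnd_inter_Iic {κ : Ordinal.{0}} (hcond : ∀ α < γ, IsCond κ A (f α))
    (hdir : ∀ α < γ, ∀ β < γ, ∃ δ < γ, CondLE (f δ) (f α) ∧ CondLE (f δ) (f β))
    {α : Ordinal.{0}} (hα : α < γ) : unionSnd γ f ∩ Iic (sSup (f α).2) = (f α).2 :=
  biUnion_inter_eq_of_directed (g := fun β => (f β).2) (S := fun β => Iic (sSup (f β).2))
    (fun α hα β hβ => let ⟨δ, hδ, hδα, hδβ⟩ := hdir α hα β hβ; ⟨δ, hδ, hδα.2, hδβ.2⟩)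
    hα fun _ hx => le_csSup (hcond α hα).1.bddAbove hx

theorem bddAbove_unionSnd {κ : Ordinal.{0}} (hcond : ∀ α < γ, IsCond κ A (f α)) :
    BddAbove (unionSnd γ f) :=
  bddAbove_biUnion_Iio fun β hβ => (hcond β hβ).1.bddAbove

theorem csSup_unionSnd_lt {κ : Cardinal.{0}} (hκ : κ.IsRegular) (hγ : γ < κ.ord)
    (hcond : ∀ α < γ, IsCond κ.ord A (f α)) : sSup (unionSnd γ f) < κ.ord :=
  csSup_biUnion_Iio_lt_ord hκ hγ (fun β hβ => (hcond β hβ).1.bddAbove)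
    fun β hβ => (hcond β hβ).1.csSup_lt

/-- A regular cardinal cannot be the supremum of fewer than its cofinality many smaller
maxima, and it is not `≤ γ` because every `c_β` reaches past `γ`. -/
theorem csSup_unionSnd_mem_of_isRegular {κ : Ordinal.{0}} (hγ0 : 0 < γ)
    (hmem : ∀ α < γ, f α ∈ DSet κ A γ) {r : Cardinal.{0}} (hr : r.IsRegular)
    (hsup : sSup (unionSnd γ f) = r.ord) : r.ord ∈ unionSnd γ f := by
  have hcond (β : Ordinal.{0}) (hβ : β < γ) : IsCond κ A (f β) := (hmem β hβ).1
  have hmax (β : Ordinal.{0}) (hβ : β < γ) : sSup (f β).2 ∈ unionSnd γ f :=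
    mem_biUnion hβ (csSup_snd_mem_of_mem_DSet (hmem β hβ))
  have hle (β : Ordinal.{0}) (hβ : β < γ) : sSup (f β).2 ≤ r.ord :=
    hsup ▸ le_csSup (bddAbove_unionSnd hcond) (hmax β hβ)
  rcases lt_or_ge γ r.ord with hγr | hrγ
  · by_contra hnot
    refine (csSup_biUnion_Iio_lt_ord hr hγr (fun β hβ => (hcond β hβ).1.bddAbove)
      fun β hβ => (hle β hβ).lt_of_ne fun heq => hnot (heq ▸ hmax β hβ)).ne hsup
  · have heq : sSup (f 0).2 = r.ord :=
      (hle 0 hγ0).antisymm (hrγ.trans (le_csSup_snd_of_mem_DSet (hmem 0 hγ0)))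
    exact heq ▸ hmax 0 hγ0

theorem isCond_unionCond {κ : Cardinal.{0}} (hκ : κ.IsRegular) (hγ0 : 0 < γ) (hγ : γ < κ.ord)
    (hmem : ∀ α < γ, f α ∈ DSet κ.ord A γ)
    (hdir : ∀ α < γ, ∀ β < γ, ∃ δ < γ, CondLE (f δ) (f α) ∧ CondLE (f δ) (f β)) :
    IsCond κ.ord A (unionCond γ f) := by
  have hcond (β : Ordinal.{0}) (hβ : β < γ) : IsCond κ.ord A (f β) := (hmem β hβ).1
  set c := unionSnd γ f
  have hbdd : BddAbove c := bddAbove_unionSnd hcond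
  have hne : c.Nonempty := ⟨_, mem_biUnion hγ0 (csSup_snd_mem_of_mem_DSet (hmem 0 hγ0))⟩
  have hle := union_singleton_csSup_subset_Iic hbdd
  have hlt : sSup c < κ.ord := csSup_unionSnd_lt hκ hγ hcond
  have hsup : sSup (c ∪ {sSup c}) = sSup c := by
    rw [union_singleton, csSup_insert hbdd hne, sup_idem]
  refine ⟨⟨fun x hx => (hle hx).trans_lt hlt, ⟨sSup c, hlt, hle⟩, ?_⟩, ?_, ?_⟩
  · exact (isClosedIn_csSup_biUnion (fun β hβ => (hcond β hβ).1)
      fun β hβ => unionSnd_inter_Iic hcond hdir hβ).union_csSup hbdd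
  · intro x hx
    obtain ⟨β, hβ, hxβ⟩ := mem_iUnion₂.1 hx
    rw [unionCond, hsup]
    exact ((hcond β hβ).2.1 hxβ).trans_le (le_csSup hbdd (mem_biUnion hβ
      (csSup_snd_mem_of_mem_DSet (hmem β hβ))))
  · rintro _ hα ⟨r, hr, rfl⟩
    have hαc : r.ord ∈ c :=
      hα.elim id fun h => csSup_unionSnd_mem_of_isRegular hγ0 hmem hr.isRegular h.symm
    obtain ⟨β, hβ, hαβ⟩ := mem_iUnion₂.1 hαc
    have hrestr : unionFst γ f ∩ Iio r.ord = (f β).1 ∩ Iio r.ord := by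
      rw [← unionFst_inter_Iio hcond hdir hβ, inter_assoc, Iio_inter_Iio,
        min_eq_right (le_csSup (hcond β hβ).1.bddAbove hαβ)]
    exact hrestr ▸ (hcond β hβ).2.2 _ hαβ ⟨r, hr, rfl⟩

theorem condLE_unionCond {κ : Ordinal.{0}} (hmem : ∀ α < γ, f α ∈ DSet κ A γ)
    (hdir : ∀ α < γ, ∀ β < γ, ∃ δ < γ, CondLE (f δ) (f α) ∧ CondLE (f δ) (f β))
    {α : Ordinal.{0}} (hα : α < γ) : CondLE (unionCond γ f) (f α) := by
  have hcond (β : Ordinal.{0}) (hβ : β < γ) : IsCond κ A (f β) := (hmem β hβ).1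
  refine ⟨unionFst_inter_Iio hcond hdir hα, ?_⟩
  rw [unionCond, union_inter_distrib_right, unionSnd_inter_Iic hcond hdir hα, union_eq_left]
  rintro _ ⟨rfl, hle⟩
  have hσ := csSup_snd_mem_of_mem_DSet (hmem α hα)
  have heq : sSup (unionSnd γ f) = sSup (f α).2 :=
    (le_csSup (bddAbove_unionSnd hcond) (mem_biUnion hα hσ)).antisymm' hle
  exact heq ▸ hσ

end DirectedFamily

theorem DSet_directed_closed_general (κ : Cardinal.{0}) (hκ : κ.IsInaccessible)
    (A : Ordinal.{0} → Set Ordinal.{0})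
    (γ : Ordinal.{0}) (hγ0 : 0 < γ) (hγ : γ < κ.ord)
    (f : Ordinal.{0} → Set Ordinal.{0} × Set Ordinal.{0})
    (hmem : ∀ α < γ, f α ∈ DSet κ.ord A γ)
    (hdir : ∀ α < γ, ∀ β < γ, ∃ δ < γ, CondLE (f δ) (f α) ∧ CondLE (f δ) (f β)) :
    ∀ s c cbar : Set Ordinal.{0},
      s = (⋃ α ∈ Set.Iio γ, (f α).1) →
      c = (⋃ α ∈ Set.Iio γ, (f α).2) →
      cbar = c ∪ {sSup c} →
      IsCond κ.ord A (s, cbar) ∧ (s, cbar) ∈ DSet κ.ord A γ ∧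
        ∀ α < γ, CondLE (s, cbar) (f α) := by
  rintro s c cbar rfl rfl rfl
  have hcond : IsCond κ.ord A (unionCond γ f) := isCond_unionCond hκ.isRegular hγ0 hγ hmem hdir
  refine ⟨hcond, ⟨hcond, ?_⟩, fun α hα => condLE_unionCond hmem hdir hα⟩
  obtain ⟨e, he, hγe⟩ := (hmem 0 hγ0).2
  exact ⟨e, Or.inl (mem_biUnion hγ0 he), hγe⟩

/-- For a strongly inaccessible `κ`, a potential `◊_κ` sequence `A` and
`0 < γ < κ`, the set `D_γ` is `≤γ`-directed closed: for every directed family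
`⟨(s_α, c_α) : α < γ⟩` of conditions in `D_γ`, the pair `(s, c̄)` with
`s = ⋃_{α<γ} s_α`, `c = ⋃_{α<γ} c_α` and `c̄ = c ∪ {sup c}` is a condition,
lies in `D_γ`, and is a lower bound of every `(s_α, c_α)`. -/
theorem DSet_directed_closed (κ : Cardinal.{0}) (hκ : κ.IsInaccessible)
    (A : Ordinal.{0} → Set Ordinal.{0}) (hA : ∀ α < κ.ord, A α ⊆ Set.Iio α)
    (γ : Ordinal.{0}) (hγ0 : 0 < γ) (hγ : γ < κ.ord)
    (f : Ordinal.{0} → Set Ordinal.{0} × Set Ordinal.{0})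
    (hmem : ∀ α < γ, f α ∈ DSet κ.ord A γ)
    (hdir : ∀ α < γ, ∀ β < γ, ∃ δ < γ, CondLE (f δ) (f α) ∧ CondLE (f δ) (f β)) :
    ∀ s c cbar : Set Ordinal.{0},
      s = (⋃ α ∈ Set.Iio γ, (f α).1) →
      c = (⋃ α ∈ Set.Iio γ, (f α).2) →
      cbar = c ∪ {sSup c} →
      IsCond κ.ord A (s, cbar) ∧ (s, cbar) ∈ DSet κ.ord A γ ∧
        ∀ α < γ, CondLE (s, cbar) (f α) :=
  DSet_directed_closed_general κ hκ A γ hγ0 hγ f hmem hdir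
end

section
/- Let κ be a strongly inaccessible cardinal, let ⟨A_α : α < κ⟩ be a potential ◊_κ sequence, and let 0 < γ < κ. In the <κ-support product P of κ⁺ many copies of the diamond killing poset Q, the set D of conditions p such that for every ξ < κ⁺ the coordinate p(ξ) is either the maximum condition (∅,∅) or lies in D_γ is dense in P, and D is ≤γ-directed closed: every family ⟨p_α : α < γ⟩ of members of D that is directed (any two members have a common lower bound among the members) has a lower bound in D. -/
open Set

/-- A condition of the `<κ`-support product of `κ⁺` many copies of the diamond
killing poset: `p ξ` is a condition for every `ξ < κ⁺`, `p ξ` is the maximum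
condition `(∅, ∅)` off `κ⁺`, and `p ξ = (∅, ∅)` for all but fewer than `κ` many `ξ`. -/
def IsProdCond (κ : Cardinal.{0}) (A : Ordinal.{0} → Set Ordinal.{0})
    (p : Ordinal.{0} → Set Ordinal.{0} × Set Ordinal.{0}) : Prop :=
  (∀ ξ < (Order.succ κ).ord, IsCond κ.ord A (p ξ)) ∧
  (∀ ξ, ¬ ξ < (Order.succ κ).ord → p ξ = (∅, ∅)) ∧
  Cardinal.mk {ξ : Ordinal.{0} // p ξ ≠ (∅, ∅)} < Cardinal.lift.{1,0} κ

/-- The coordinatewise ordering of the product. -/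
def ProdLE (p q : Ordinal.{0} → Set Ordinal.{0} × Set Ordinal.{0}) : Prop :=
  ∀ ξ, CondLE (p ξ) (q ξ)

/-- The set `D` of product conditions all of whose coordinates are either the
maximum condition `(∅, ∅)` or lie in `D_γ`. -/
def ProdDSet (κ : Cardinal.{0}) (A : Ordinal.{0} → Set Ordinal.{0}) (γ : Ordinal.{0}) :
    Set (Ordinal.{0} → Set Ordinal.{0} × Set Ordinal.{0}) :=
  {p | IsProdCond κ A p ∧ ∀ ξ < (Order.succ κ).ord, p ξ = (∅, ∅) ∨ p ξ ∈ DSet κ.ord A γ}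

/-!
Density: a nontrivial coordinate `(s, c)` is pushed into `D_γ` by adding the successor ordinal
`max (sup c) γ + 1` to `c`; successor ordinals are never inaccessible, so no new requirement on
`s` arises.

Directed closure: for a directed family the coordinatewise unions `S = ⋃ s_α`, `C = ⋃ c_α` cohere,
`S ∩ sup c_α = s_α` and `C ∩ (sup c_α + 1) = c_α`, so `C` is closed below `σ = sup C` and adding `σ`
gives a lower bound. Regularity of `κ` puts `σ` below `κ`. If `σ ∉ C`, then `σ` is the supremum of
the `γ` many smaller ordinals `sup c_α`, while some member of `D_γ` puts an element `≥ γ` into `C`,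
so `γ < σ`; hence `σ` is singular and in particular not inaccessible. The supports stay below `κ`
because a union of fewer than `κ` sets of size `< κ` has size `< κ`.
-/

open Cardinal Order

section DiamondKilling

variable {κ γ δ : Ordinal.{0}} {A : Ordinal.{0} → Set Ordinal.{0}}
  {c : Set Ordinal.{0}} {p q : Set Ordinal.{0} × Set Ordinal.{0}}

theorem IsClosedIn.mono (h : IsClosedIn κ c) (hδ : δ ≤ κ) : IsClosedIn δ c :=
  fun α hα => h α (hα.trans_le hδ)

theorem IsClosedBddIn.bddAbove_s6 (h : IsClosedBddIn κ c) : BddAbove c :=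
  let ⟨_, ⟨β, _, hβ⟩, _⟩ := h
  ⟨β, hβ⟩

theorem IsClosedBddIn.sSup_lt (h : IsClosedBddIn κ c) : sSup c < κ :=
  let ⟨_, ⟨_, hβκ, hβ⟩, _⟩ := h
  (csSup_le' hβ).trans_lt hβκ

theorem IsClosedBddIn.sSup_mem (h : IsClosedBddIn κ c) (hne : c.Nonempty) : sSup c ∈ c := by
  by_contra hnot
  have hpos : sSup c ≠ 0 := by
    intro h0
    obtain ⟨x, hx⟩ := hne
    have hx0 : x = 0 := nonpos_iff_eq_zero.1 (h0 ▸ le_csSup h.bddAbove_s6 hx)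
    exact hnot (h0 ▸ hx0 ▸ hx)
  refine hnot (h.2.2 _ h.sSup_lt hpos fun b hb => ?_)
  obtain ⟨e, he, hbe⟩ := exists_lt_of_lt_csSup hne hb
  exact ⟨e, he, hbe, (le_csSup h.bddAbove_s6 he).lt_of_ne fun h => hnot (h ▸ he)⟩

theorem isCond_bot (hκ : 0 < κ) : IsCond κ A (∅, ∅) := by
  refine ⟨⟨empty_subset _, ⟨0, hκ, by simp⟩, fun α _ hα0 hlim => ?_⟩, empty_subset _, by simp⟩
  obtain ⟨_, h, -⟩ := hlim 0 (pos_iff_ne_zero.2 hα0)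
  exact h.elim

theorem isCond_of_eq_bot_or_mem_dSet (hκ : 0 < κ) (h : p = (∅, ∅) ∨ p ∈ DSet κ A γ) :
    IsCond κ A p :=
  h.elim (· ▸ isCond_bot hκ) (·.1)

theorem condLE_bot : CondLE (∅, ∅) (∅, ∅) :=
  ⟨empty_inter _, empty_inter _⟩

theorem IsCond.condLE_self (hp : IsCond κ A p) : CondLE p p :=
  ⟨inter_eq_left.2 hp.2.1, inter_eq_left.2 fun _ hx => le_csSup hp.1.bddAbove_s6 hx⟩

theorem CondLE.fst_subset (h : CondLE p q) : q.1 ⊆ p.1 :=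
  h.1 ▸ inter_subset_left

theorem CondLE.snd_subset (h : CondLE p q) : q.2 ⊆ p.2 :=
  h.2 ▸ inter_subset_left

theorem not_isInaccOrd_add_one (x : Ordinal.{0}) : ¬ IsInaccOrd (x + 1) := by
  rintro ⟨c, hc, hx⟩
  exact not_isSuccLimit_add_one x (hx ▸ isSuccLimit_ord hc.aleph0_lt.le)

def withTop (δ : Ordinal.{0}) (p : Set Ordinal.{0} × Set Ordinal.{0}) :
    Set Ordinal.{0} × Set Ordinal.{0} :=
  (p.1, insert δ p.2)

theorem withTop_eq_self (h : δ ∈ p.2) : withTop δ p = p :=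
  Prod.ext rfl (insert_eq_of_mem h)

theorem sSup_insert_of_forall_le (hle : ∀ x ∈ c, x ≤ δ) : sSup (insert δ c) = δ :=
  IsGreatest.csSup_eq ⟨mem_insert δ c, fun x hx => hx.elim le_of_eq (hle x)⟩

theorem isClosedIn_insert (hle : ∀ x ∈ c, x ≤ δ) (hcl : IsClosedIn δ c) :
    IsClosedIn κ (insert δ c) := by
  intro α _ hα0 hlim
  rcases lt_trichotomy α δ with hαδ | rfl | hδα
  · refine mem_insert_of_mem _ (hcl α hαδ hα0 fun β hβ => ?_)
    obtain ⟨e, he, hβe, heα⟩ := hlim β hβ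
    exact ⟨e, he.resolve_left (heα.trans hαδ).ne, hβe, heα⟩
  · exact mem_insert _ _
  · obtain ⟨e, he, hδe, -⟩ := hlim δ hδα
    exact (hδe.not_ge (he.elim le_of_eq (hle e))).elim

theorem isCond_withTop (hδ : δ < κ) (hc : p.2 ⊆ Iio κ) (hle : ∀ x ∈ p.2, x ≤ δ)
    (hcl : IsClosedIn δ p.2) (hs : p.1 ⊆ Iio δ)
    (hA : ∀ α ∈ p.2, IsInaccOrd α → p.1 ∩ Iio α ≠ A α) (htop : IsInaccOrd δ → δ ∈ p.2) :
    IsCond κ A (withTop δ p) := by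
  refine ⟨⟨insert_subset hδ hc, ⟨δ, hδ, fun x hx => hx.elim le_of_eq (hle x)⟩,
    isClosedIn_insert hle hcl⟩, ?_, ?_⟩
  · simpa only [withTop, sSup_insert_of_forall_le hle] using hs
  · rintro α (rfl | hα) hin
    exacts [hA α (htop hin) hin, hA α hα hin]

theorem CondLE.withTop (h : CondLE p q) (hδ : sSup q.2 < δ) : CondLE (withTop δ p) q :=
  ⟨h.1, (insert_inter_of_notMem (notMem_Iic.2 hδ)).trans h.2⟩

noncomputable def extendPast (γ : Ordinal.{0}) (p : Set Ordinal.{0} × Set Ordinal.{0}) :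
    Set Ordinal.{0} × Set Ordinal.{0} :=
  withTop (max (sSup p.2) γ + 1) p

theorem IsCond.extendPast_condLE (hp : IsCond κ A p) : CondLE (extendPast γ p) p :=
  hp.condLE_self.withTop ((le_max_left _ _).trans_lt (lt_add_one _))

theorem IsCond.extendPast_mem_dSet (hκ : IsSuccLimit κ) (hγ : γ < κ) (hp : IsCond κ A p) :
    extendPast γ p ∈ DSet κ A γ := by
  have hσδ : sSup p.2 < max (sSup p.2) γ + 1 := (le_max_left _ _).trans_lt (lt_add_one _)
  have hγδ : γ < max (sSup p.2) γ + 1 := (le_max_right _ _).trans_lt (lt_add_one _)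
  have hδκ : max (sSup p.2) γ + 1 < κ := by
    rw [← succ_eq_add_one]
    exact hκ.succ_lt (max_lt hp.1.sSup_lt hγ)
  refine ⟨isCond_withTop hδκ hp.1.1 (fun x hx => (le_csSup hp.1.bddAbove_s6 hx).trans hσδ.le)
    (hp.1.2.2.mono hδκ.le) (hp.2.1.trans (Iio_subset_Iio hσδ.le)) hp.2.2
    (absurd · (not_isInaccOrd_add_one _)), _, mem_insert _ _, hγδ.not_gt⟩

end DiamondKilling

section DirectedUnion

variable {κ : Cardinal.{0}} {γ α : Ordinal.{0}} {A : Ordinal.{0} → Set Ordinal.{0}}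
  {g : Ordinal.{0} → Set Ordinal.{0} × Set Ordinal.{0}}

theorem biUnion_inter_eq_of_forall_exists {ι β : Type*} {s : Set ι} {a : ι → Set β} {B : Set β}
    {i : ι} (hi : i ∈ s) (hB : a i ⊆ B) (h : ∀ j ∈ s, ∃ k, a j ⊆ a k ∧ a k ∩ B = a i) :
    (⋃ j ∈ s, a j) ∩ B = a i := by
  refine Subset.antisymm ?_ fun x hx => ⟨mem_biUnion hi hx, hB hx⟩
  rintro x ⟨hx, hxB⟩
  obtain ⟨j, hj, hxj⟩ := mem_iUnion₂.1 hx
  obtain ⟨k, hjk, hk⟩ := h j hj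
  exact hk ▸ ⟨hjk hxj, hxB⟩

theorem iSup_Iio_lt_ord {c : Cardinal.{0}} (hc : c.IsRegular) (hγ : γ < c.ord)
    {f : Ordinal.{0} → Ordinal.{0}} (hf : ∀ α < γ, f α < c.ord) : ⨆ α : Iio γ, f α < c.ord := by
  refine Ordinal.lift_iSup_lt_of_lt_cof ?_ fun α => hf α α.2
  rw [Cardinal.mk_Iio_ordinal, ← Ordinal.lift_cof, hc.cof_ord, lift_uzero, lift_lt]
  exact lt_ord.1 hγ

def famUnion (g : Ordinal.{0} → Set Ordinal.{0} × Set Ordinal.{0}) (γ : Ordinal.{0}) :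
    Set Ordinal.{0} × Set Ordinal.{0} :=
  (⋃ α ∈ Iio γ, (g α).1, ⋃ α ∈ Iio γ, (g α).2)

noncomputable def famSup (g : Ordinal.{0} → Set Ordinal.{0} × Set Ordinal.{0})
    (γ : Ordinal.{0}) : Ordinal.{0} :=
  ⨆ α : Iio γ, sSup (g α).2

theorem condLE_famUnion (hcond : ∀ α < γ, IsCond κ.ord A (g α))
    (hdir : DirectedOn (fun α β => CondLE (g β) (g α)) (Iio γ))
    (hα : α < γ) : CondLE (famUnion g γ) (g α) := by
  have hlower : ∀ β < γ, ∃ δ, CondLE (g δ) (g β) ∧ CondLE (g δ) (g α) := fun β hβ =>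
    let ⟨δ, _, hδβ, hδα⟩ := hdir β hβ α hα
    ⟨δ, hδβ, hδα⟩
  constructor
  · refine biUnion_inter_eq_of_forall_exists hα (hcond α hα).2.1 fun β hβ => ?_
    obtain ⟨δ, hδβ, hδα⟩ := hlower β hβ
    exact ⟨δ, hδβ.fst_subset, hδα.1⟩
  · refine biUnion_inter_eq_of_forall_exists hα (fun x hx => le_csSup (hcond α hα).1.bddAbove_s6 hx)
      fun β hβ => ?_
    obtain ⟨δ, hδβ, hδα⟩ := hlower β hβ
    exact ⟨δ, hδβ.snd_subset, hδα.2⟩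

theorem sSup_le_famSup (hα : α < γ) : sSup (g α).2 ≤ famSup g γ :=
  le_ciSup Ordinal.bddAbove_of_small (⟨α, hα⟩ : Iio γ)

theorem le_famSup (hcond : ∀ α < γ, IsCond κ.ord A (g α)) {x : Ordinal.{0}}
    (hx : x ∈ (famUnion g γ).2) : x ≤ famSup g γ := by
  obtain ⟨α, hα, hxα⟩ := mem_iUnion₂.1 hx
  exact (le_csSup (hcond α hα).1.bddAbove_s6 hxα).trans (sSup_le_famSup hα)

theorem famSup_lt (hκ : κ.IsRegular) (hγ : γ < κ.ord) (hcond : ∀ α < γ, IsCond κ.ord A (g α)) :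
    famSup g γ < κ.ord :=
  iSup_Iio_lt_ord hκ hγ fun α hα => (hcond α hα).1.sSup_lt

theorem isClosedIn_famUnion (hcond : ∀ α < γ, IsCond κ.ord A (g α))
    (hdir : DirectedOn (fun α β => CondLE (g β) (g α)) (Iio γ)) :
    IsClosedIn (famSup g γ) (famUnion g γ).2 := by
  intro α hασ hα0 hlim
  obtain ⟨⟨β, hβ⟩, hαβ⟩ := exists_lt_of_lt_ciSup' hασ
  have hcoh := (condLE_famUnion hcond hdir hβ).2
  refine mem_biUnion hβ ((hcond β hβ).1.2.2 α (hαβ.trans (hcond β hβ).1.sSup_lt) hα0 fun b hb => ?_)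
  obtain ⟨e, he, hbe, heα⟩ := hlim b hb
  exact ⟨e, hcoh ▸ ⟨he, (heα.trans hαβ).le⟩, hbe, heα⟩

theorem sSup_lt_famSup (hcond : ∀ α < γ, IsCond κ.ord A (g α)) (hne : (famUnion g γ).2.Nonempty)
    (hσ : famSup g γ ∉ (famUnion g γ).2) (hα : α < γ) : sSup (g α).2 < famSup g γ := by
  refine (sSup_le_famSup hα).lt_of_ne fun h => hσ ?_
  rcases (g α).2.eq_empty_or_nonempty with he | he
  · obtain ⟨x, hx⟩ := hne
    have hx0 := le_famSup hcond hx
    rw [← h, he, csSup_empty, le_bot_iff] at hx0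
    rwa [← h, he, csSup_empty, ← hx0]
  · exact h ▸ mem_biUnion hα ((hcond α hα).1.sSup_mem he)

theorem famSup_mem_of_isInaccOrd (hcond : ∀ α < γ, IsCond κ.ord A (g α))
    (hwit : ∃ x ∈ (famUnion g γ).2, γ ≤ x) (hin : IsInaccOrd (famSup g γ)) :
    famSup g γ ∈ (famUnion g γ).2 := by
  obtain ⟨x, hx, hγx⟩ := hwit
  by_contra hσ
  obtain ⟨c, hc, hσc⟩ := hin
  have hγσ : γ < famSup g γ := by
    refine (hγx.trans (le_famSup hcond hx)).lt_of_ne fun h => hσ ?_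
    rwa [← le_antisymm (le_famSup hcond hx) (h ▸ hγx)]
  refine (iSup_Iio_lt_ord (f := fun α => sSup (g α).2) hc.isRegular (hσc ▸ hγσ)
    fun α hα => ?_).ne hσc
  exact hσc ▸ sSup_lt_famSup hcond ⟨x, hx⟩ hσ hα

theorem isCond_withTop_famUnion (hκ : κ.IsRegular) (hγ : γ < κ.ord)
    (hcond : ∀ α < γ, IsCond κ.ord A (g α))
    (hdir : DirectedOn (fun α β => CondLE (g β) (g α)) (Iio γ))
    (hwit : ∃ x ∈ (famUnion g γ).2, γ ≤ x) :
    IsCond κ.ord A (withTop (famSup g γ) (famUnion g γ)) := by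
  refine isCond_withTop (famSup_lt hκ hγ hcond) (iUnion₂_subset fun α hα => (hcond α hα).1.1)
    (fun _ => le_famSup hcond) (isClosedIn_famUnion hcond hdir)
    (iUnion₂_subset fun α hα => (hcond α hα).2.1.trans (Iio_subset_Iio (sSup_le_famSup hα)))
    (fun x hx hin => ?_) (famSup_mem_of_isInaccOrd hcond hwit)
  obtain ⟨α, hα, hxα⟩ := mem_iUnion₂.1 hx
  have hS : (famUnion g γ).1 ∩ Iio x = (g α).1 ∩ Iio x := by
    rw [← (condLE_famUnion hcond hdir hα).1, inter_assoc,
      inter_eq_right.2 (Iio_subset_Iio (le_csSup (hcond α hα).1.bddAbove_s6 hxα))]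
  rw [hS]
  exact (hcond α hα).2.2 x hxα hin

theorem withTop_famUnion_condLE (hcond : ∀ α < γ, IsCond κ.ord A (g α))
    (hdir : DirectedOn (fun α β => CondLE (g β) (g α)) (Iio γ))
    (hne : (famUnion g γ).2.Nonempty) (hα : α < γ) :
    CondLE (withTop (famSup g γ) (famUnion g γ)) (g α) := by
  by_cases hσ : famSup g γ ∈ (famUnion g γ).2
  · rw [withTop_eq_self hσ]
    exact condLE_famUnion hcond hdir hα
  · exact (condLE_famUnion hcond hdir hα).withTop (sSup_lt_famSup hcond hne hσ hα)

theorem exists_lowerBound_of_directedOn (hκ : κ.IsRegular) (hγ : γ < κ.ord)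
    (hD : ∀ α < γ, g α = (∅, ∅) ∨ g α ∈ DSet κ.ord A γ)
    (hdir : DirectedOn (fun α β => CondLE (g β) (g α)) (Iio γ)) :
    ∃ r, (r = (∅, ∅) ∨ r ∈ DSet κ.ord A γ) ∧ (∀ α < γ, CondLE r (g α)) ∧
      ((∀ α < γ, g α = (∅, ∅)) → r = (∅, ∅)) := by
  by_cases hbot : ∀ α < γ, g α = (∅, ∅)
  · exact ⟨(∅, ∅), Or.inl rfl, fun α hα => hbot α hα ▸ condLE_bot, fun _ => rfl⟩
  obtain ⟨β, hβ, hgβ⟩ := not_forall₂.1 hbot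
  obtain ⟨-, x, hx, hγx⟩ := (hD β hβ).resolve_left hgβ
  have hcond : ∀ α < γ, IsCond κ.ord A (g α) := fun α hα =>
    isCond_of_eq_bot_or_mem_dSet (isSuccLimit_ord hκ.aleph0_le).pos (hD α hα)
  have hxC : x ∈ (famUnion g γ).2 := mem_biUnion hβ hx
  have hγσ : γ ≤ famSup g γ := (not_lt.1 hγx).trans (le_famSup hcond hxC)
  refine ⟨_, Or.inr ⟨isCond_withTop_famUnion hκ hγ hcond hdir ⟨x, hxC, not_lt.1 hγx⟩,
      famSup g γ, mem_insert _ _, hγσ.not_gt⟩,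
    fun α => withTop_famUnion_condLE hcond hdir ⟨x, hxC⟩, fun h => (hgβ (h β hβ)).elim⟩

end DirectedUnion

section Product

variable {κ : Cardinal.{0}} {γ : Ordinal.{0}} {A : Ordinal.{0} → Set Ordinal.{0}}
  {p : Ordinal.{0} → Set Ordinal.{0} × Set Ordinal.{0}}

theorem IsProdCond.isCond (hp : IsProdCond κ A p) (hκ : 0 < κ.ord) (ξ : Ordinal.{0}) :
    IsCond κ.ord A (p ξ) := by
  by_cases hξ : ξ < (succ κ).ord
  · exact hp.1 ξ hξ
  · exact hp.2.1 ξ hξ ▸ isCond_bot hκ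

theorem mem_prodDSet_apply (hp : p ∈ ProdDSet κ A γ) (ξ : Ordinal.{0}) :
    p ξ = (∅, ∅) ∨ p ξ ∈ DSet κ.ord A γ := by
  by_cases hξ : ξ < (succ κ).ord
  · exact hp.2 ξ hξ
  · exact Or.inl (hp.1.2.1 ξ hξ)

theorem mk_biUnion_Iio_lt {β : Type 1} (hκ : κ.IsRegular) (hγ : γ < κ.ord)
    {t : Ordinal.{0} → Set β} (ht : ∀ α < γ, #(t α) < lift.{1} κ) :
    #(⋃ α ∈ Iio γ, t α) < lift.{1} κ := by
  refine (card_biUnion_lt_iff_forall_of_isRegular hκ.lift ?_).2 ht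
  rw [Cardinal.mk_Iio_ordinal, lift_lt]
  exact lt_ord.1 hγ

theorem exists_mem_prodDSet_prodLE (hκ : IsSuccLimit κ.ord) (hγ : γ < κ.ord)
    (hp : IsProdCond κ A p) : ∃ q ∈ ProdDSet κ A γ, ProdLE q p := by
  classical
  let q ξ := if p ξ = (∅, ∅) then (∅, ∅) else extendPast γ (p ξ)
  have hq : ∀ ξ, (q ξ = (∅, ∅) ∨ q ξ ∈ DSet κ.ord A γ) ∧ CondLE (q ξ) (p ξ) := by
    intro ξ
    by_cases hξ : p ξ = (∅, ∅)
    · rw [show q ξ = (∅, ∅) from if_pos hξ, hξ]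
      exact ⟨Or.inl rfl, condLE_bot⟩
    · rw [show q ξ = extendPast γ (p ξ) from if_neg hξ]
      exact ⟨Or.inr ((hp.isCond hκ.pos ξ).extendPast_mem_dSet hκ hγ),
        (hp.isCond hκ.pos ξ).extendPast_condLE⟩
  have hsupp : ∀ ξ, q ξ ≠ (∅, ∅) → p ξ ≠ (∅, ∅) := fun ξ hqξ hpξ => hqξ (if_pos hpξ)
  refine ⟨q, ⟨⟨fun ξ _ => ?_, fun ξ hξ => if_pos (hp.2.1 ξ hξ),
    (mk_subtype_mono hsupp).trans_lt hp.2.2⟩, fun ξ _ => (hq ξ).1⟩, fun ξ => (hq ξ).2⟩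
  exact isCond_of_eq_bot_or_mem_dSet hκ.pos (hq ξ).1

theorem exists_mem_prodDSet_forall_prodLE (hκ : κ.IsRegular) (hγ : γ < κ.ord)
    (f : Ordinal.{0} → Ordinal.{0} → Set Ordinal.{0} × Set Ordinal.{0})
    (hf : ∀ α < γ, f α ∈ ProdDSet κ A γ)
    (hdir : DirectedOn (fun α β => ProdLE (f β) (f α)) (Iio γ)) :
    ∃ r ∈ ProdDSet κ A γ, ∀ α < γ, ProdLE r (f α) := by
  have hex : ∀ ξ, ∃ r, (r = (∅, ∅) ∨ r ∈ DSet κ.ord A γ) ∧ (∀ α < γ, CondLE r (f α ξ)) ∧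
      ((∀ α < γ, f α ξ = (∅, ∅)) → r = (∅, ∅)) := fun ξ =>
    exists_lowerBound_of_directedOn hκ hγ (fun α hα => mem_prodDSet_apply (hf α hα) ξ)
      fun α hα β hβ => (hdir α hα β hβ).imp fun _ ⟨hδ, h₁, h₂⟩ => ⟨hδ, h₁ ξ, h₂ ξ⟩
  choose r hrD hrle hrbot using hex
  have hsupp : {ξ | r ξ ≠ (∅, ∅)} ⊆ ⋃ α ∈ Iio γ, {ξ | f α ξ ≠ (∅, ∅)} := fun ξ hξ =>
    mem_iUnion₂.2 (not_forall₂.1 (mt (hrbot ξ) hξ))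
  refine ⟨r, ⟨⟨fun ξ _ => ?_, fun ξ hξ => hrbot ξ fun α hα => (hf α hα).1.2.1 ξ hξ,
    (mk_le_mk_of_subset hsupp).trans_lt (mk_biUnion_Iio_lt hκ hγ fun α hα => (hf α hα).1.2.2)⟩,
    fun ξ _ => hrD ξ⟩, fun α hα ξ => hrle ξ α hα⟩
  exact isCond_of_eq_bot_or_mem_dSet (isSuccLimit_ord hκ.aleph0_le).pos (hrD ξ)

end Product

theorem prodDSet_dense_and_directed_closed_general (κ : Cardinal.{0}) (hκ : κ.IsInaccessible)
    (A : Ordinal.{0} → Set Ordinal.{0})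
    (γ : Ordinal.{0}) (hγ : γ < κ.ord) :
    (∀ p, IsProdCond κ A p → ∃ q ∈ ProdDSet κ A γ, ProdLE q p) ∧
    (∀ f : Ordinal.{0} → Ordinal.{0} → Set Ordinal.{0} × Set Ordinal.{0},
      (∀ α < γ, f α ∈ ProdDSet κ A γ) →
      (∀ α < γ, ∀ β < γ, ∃ δ < γ, ProdLE (f δ) (f α) ∧ ProdLE (f δ) (f β)) →
      ∃ r ∈ ProdDSet κ A γ, ∀ α < γ, ProdLE r (f α)) :=
  ⟨fun _ => exists_mem_prodDSet_prodLE (isSuccLimit_ord hκ.aleph0_lt.le) hγ,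
    exists_mem_prodDSet_forall_prodLE hκ.isRegular hγ⟩

/-- For a strongly inaccessible `κ`, a potential `◊_κ` sequence `A` and
`0 < γ < κ`: in the `<κ`-support product of `κ⁺` many copies of the diamond
killing poset, the set `D` of conditions all of whose coordinates are trivial
or in `D_γ` is dense, and `D` is `≤γ`-directed closed. -/
theorem prodDSet_dense_and_directed_closed (κ : Cardinal.{0}) (hκ : κ.IsInaccessible)
    (A : Ordinal.{0} → Set Ordinal.{0}) (hA : ∀ α < κ.ord, A α ⊆ Set.Iio α)
    (γ : Ordinal.{0}) (hγ0 : 0 < γ) (hγ : γ < κ.ord) :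
    (∀ p, IsProdCond κ A p → ∃ q ∈ ProdDSet κ A γ, ProdLE q p) ∧
    (∀ f : Ordinal.{0} → Ordinal.{0} → Set Ordinal.{0} × Set Ordinal.{0},
      (∀ α < γ, f α ∈ ProdDSet κ A γ) →
      (∀ α < γ, ∀ β < γ, ∃ δ < γ, ProdLE (f δ) (f α) ∧ ProdLE (f δ) (f β)) →
      ∃ r ∈ ProdDSet κ A γ, ∀ α < γ, ProdLE r (f α)) :=
  prodDSet_dense_and_directed_closed_general κ hκ A γ hγ
end
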